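/- Let X be a finite set with |X| ≥ 2, let k be a positive integer, let Y be a finite set with |Y| = k, and let (h_i)_{i∈I} be a pairwise-independent hash family from X to Y indexed by a nonempty finite set I. Let ε be a real number with 0 < ε < 1, and let S ⊆ X be a subset satisfying k ≤ 2|S| ≤ (1+ε)·k. Then for every y ∈ Y, the fraction of indices i ∈ I for which S ∩ h_i⁻¹(y) has exactly one element is at least (1−ε²)/4; that is, |{i ∈ I : |S ∩ h_i⁻¹(y)| = 1}| ≥ |I| · (1−ε²)/4. -/

import Mathlib

/-!
For each index `i` let `m` be the number of elements of `S` that `h i` sends to `y`. Pointwise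
`m - m (m - 1) ≤ [m = 1]`, so summing over `i` and counting the pairs by pairwise independence,
the number of good indices is at least `|I| (s/k - s(s-1)/k²) ≥ |I| (t - t²)` with `t = s/k`.
The hypothesis on `k` says `1/2 ≤ t ≤ (1+ε)/2`, and there `t - t² = (1 - (2t-1)²)/4 ≥ (1-ε²)/4`.
-/

open Finset

lemma natCast_card_sub_card_offDiag_le {α : Type*} (s : Finset α) :
    (#s : ℝ) - #s.offDiag ≤ if #s = 1 then 1 else 0 := by
  rw [offDiag_card, Nat.cast_sub (Nat.le_mul_self _), Nat.cast_mul]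
  split_ifs with hs
  · simp [hs]
  · rcases Nat.lt_or_gt_of_ne hs with hs0 | hs2
    · simp [Nat.lt_one_iff.mp hs0]
    · have : (2 : ℝ) ≤ #s := by exact_mod_cast hs2
      nlinarith

theorem sum_card_sub_sum_card_offDiag_le_card_filter_eq_one {X Y I : Type*} [Fintype I]
    [DecidableEq Y] (h : I → X → Y) (S : Finset X) (y : Y) :
    ∑ x ∈ S, (#{i | h i x = y} : ℝ) - ∑ p ∈ S.offDiag, (#{i | h i p.1 = y ∧ h i p.2 = y} : ℝ)
      ≤ #{i | #{x ∈ S | h i x = y} = 1} := by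
  have hsingles : ∑ x ∈ S, #{i | h i x = y} = ∑ i, #{x ∈ S | h i x = y} :=
    sum_card_bipartiteAbove_eq_sum_card_bipartiteBelow (fun x i => h i x = y)
  have hpairs : ∑ p ∈ S.offDiag, #{i | h i p.1 = y ∧ h i p.2 = y}
      = ∑ i, #{x ∈ S | h i x = y}.offDiag :=
    (sum_card_bipartiteAbove_eq_sum_card_bipartiteBelow
      (fun (p : X × X) i => h i p.1 = y ∧ h i p.2 = y)).trans <|
      sum_congr rfl fun i _ => congrArg card <| by
        ext p
        simp only [bipartiteBelow, mem_filter, mem_offDiag]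
        tauto
  rw [← Nat.cast_sum, ← Nat.cast_sum, hsingles, hpairs, Nat.cast_sum, Nat.cast_sum,
    ← sum_sub_distrib, natCast_card_filter]
  exact sum_le_sum fun i _ => natCast_card_sub_card_offDiag_le _

def IsPairwiseIndependent {X Y I : Type*} [Fintype Y] [Fintype I] [DecidableEq Y]
    (h : I → X → Y) : Prop :=
  ∀ x x' : X, x ≠ x' → ∀ y y' : Y,
    #{i | h i x = y ∧ h i x' = y'} * Fintype.card Y ^ 2 = Fintype.card I

namespace IsPairwiseIndependent

variable {X Y I : Type*} [Fintype Y] [Fintype I] [DecidableEq Y] {h : I → X → Y}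

theorem natCast_card_filter_apply_eq_apply (hh : IsPairwiseIndependent h) {x x' : X}
    (hx : x ≠ x') (y y' : Y) :
    (#{i | h i x = y ∧ h i x' = y'} : ℝ) = Fintype.card I / Fintype.card Y ^ 2 := by
  have hY : (0 : ℝ) < Fintype.card Y := by exact_mod_cast Fintype.card_pos_iff.mpr ⟨y⟩
  rw [eq_div_iff (by positivity)]
  exact_mod_cast hh x x' hx y y'

/-- Marginalise over the value at a second point `x' ≠ x`. -/
theorem natCast_card_filter_apply_eq [Nontrivial X] (hh : IsPairwiseIndependent h)
    (x : X) (y : Y) : (#{i | h i x = y} : ℝ) = Fintype.card I / Fintype.card Y := by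
  obtain ⟨x', hx'⟩ := exists_ne x
  have hY : (0 : ℝ) < Fintype.card Y := by exact_mod_cast Fintype.card_pos_iff.mpr ⟨y⟩
  rw [card_eq_sum_card_fiberwise (f := fun i => h i x') (t := univ) fun _ _ => mem_univ _]
  simp only [filter_filter]
  push_cast
  simp_rw [hh.natCast_card_filter_apply_eq_apply hx'.symm y]
  rw [sum_const, card_univ, nsmul_eq_mul]
  field_simp

theorem card_filter_card_eq_one_ge [Nontrivial X] (hh : IsPairwiseIndependent h)
    (S : Finset X) (y : Y) :
    Fintype.card I * (#S / Fintype.card Y - (#S / Fintype.card Y) ^ 2 : ℝ)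
      ≤ #{i | #{x ∈ S | h i x = y} = 1} := by
  refine le_trans ?_ (sum_card_sub_sum_card_offDiag_le_card_filter_eq_one h S y)
  rw [sum_congr rfl fun x _ => hh.natCast_card_filter_apply_eq x y,
    sum_congr rfl fun p hp => hh.natCast_card_filter_apply_eq_apply (mem_offDiag.mp hp).2.2 y y,
    sum_const, sum_const, offDiag_card, nsmul_eq_mul, nsmul_eq_mul,
    Nat.cast_sub (Nat.le_mul_self _), Nat.cast_mul]
  have hY : (0 : ℝ) < Fintype.card Y := by exact_mod_cast Fintype.card_pos_iff.mpr ⟨y⟩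
  refine le_of_sub_nonneg <|
    (by positivity : (0 : ℝ) ≤ Fintype.card I * #S / Fintype.card Y ^ 2).trans_eq ?_
  field_simp
  ring

end IsPairwiseIndependent

lemma one_sub_sq_div_four_le_sub_sq {ε t : ℝ} (ht1 : 1 / 2 ≤ t) (ht2 : t ≤ (1 + ε) / 2) :
    (1 - ε ^ 2) / 4 ≤ t - t ^ 2 := by
  nlinarith [mul_nonneg (by linarith : 0 ≤ ε - (2 * t - 1)) (by linarith : 0 ≤ ε + (2 * t - 1))]

theorem stmt_8_general {X Y I : Type*} [Fintype X] [Fintype Y] [Fintype I]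
    [DecidableEq Y]
    (hX : 2 ≤ Fintype.card X)
    (k : ℕ) (hY : Fintype.card Y = k)
    (h : I → X → Y)
    (hpair : ∀ x x' : X, x ≠ x' → ∀ y y' : Y,
      (univ.filter (fun i : I => h i x = y ∧ h i x' = y')).card * (Fintype.card Y) ^ 2
        = Fintype.card I)
    (ε : ℝ)
    (S : Finset X)
    (hS1 : (k : ℝ) ≤ 2 * (S.card : ℝ))
    (hS2 : 2 * (S.card : ℝ) ≤ (1 + ε) * (k : ℝ)) :
    ∀ y : Y,
      (Fintype.card I : ℝ) * ((1 - ε ^ 2) / 4)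
        ≤ ((univ.filter (fun i : I => (S.filter (fun x => h i x = y)).card = 1)).card : ℝ) := by
  intro y
  subst hY
  have : Nontrivial X := Fintype.one_lt_card_iff_nontrivial.mp hX
  have hY : (0 : ℝ) < Fintype.card Y := by exact_mod_cast Fintype.card_pos_iff.mpr ⟨y⟩
  have ht1 : 1 / 2 ≤ (#S / Fintype.card Y : ℝ) := by
    rw [div_le_div_iff₀ two_pos hY]; linarith
  have ht2 : (#S / Fintype.card Y : ℝ) ≤ (1 + ε) / 2 := by
    rw [div_le_div_iff₀ hY two_pos]; linarith
  calc (Fintype.card I : ℝ) * ((1 - ε ^ 2) / 4)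
      ≤ Fintype.card I * (#S / Fintype.card Y - (#S / Fintype.card Y) ^ 2 : ℝ) :=
        mul_le_mul_of_nonneg_left (one_sub_sq_div_four_le_sub_sq ht1 ht2) (Nat.cast_nonneg _)
    _ ≤ _ := IsPairwiseIndependent.card_filter_card_eq_one_ge hpair S y

/-- If the range size `k` is a factor-`(1+ε)` approximation of `2|S|`, then a pairwise-
independent hash maps exactly one element of `S` to any fixed `y` with probability at
least `(1−ε²)/4`. -/
theorem stmt_8 {X Y I : Type*} [Fintype X] [Fintype Y] [Fintype I]
    [DecidableEq X] [DecidableEq Y]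
    [Nonempty X] [Nonempty Y] [Nonempty I]
    (hX : 2 ≤ Fintype.card X)
    (k : ℕ) (hk : 0 < k) (hY : Fintype.card Y = k)
    (h : I → X → Y)
    (hpair : ∀ x x' : X, x ≠ x' → ∀ y y' : Y,
      (univ.filter (fun i : I => h i x = y ∧ h i x' = y')).card * (Fintype.card Y) ^ 2
        = Fintype.card I)
    (ε : ℝ) (hε0 : 0 < ε) (hε1 : ε < 1)
    (S : Finset X)
    (hS1 : (k : ℝ) ≤ 2 * (S.card : ℝ))
    (hS2 : 2 * (S.card : ℝ) ≤ (1 + ε) * (k : ℝ)) :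
    ∀ y : Y,
      (Fintype.card I : ℝ) * ((1 - ε ^ 2) / 4)
        ≤ ((univ.filter (fun i : I => (S.filter (fun x => h i x = y)).card = 1)).card : ℝ) :=
  stmt_8_general hX k hY h hpair ε S hS1 hS2
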